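/- arXiv:2310.03467 — 2 statements merged into one kernel-verified Lean document; each statement's English description precedes it below -/
import Mathlib

section
/- Let L>0, ω>0 and α>0. Let Φ : ℝ → ℂ be an even, twice continuously differentiable, L-periodic function, not identically zero, satisfying −Φ'' + ωΦ = |Φ|^α Φ on ℝ. Then there exist θ₀ ∈ ℝ and an even, real-valued, L-periodic, twice continuously differentiable function φ : ℝ → ℝ such that Φ(x) = e^{iθ₀} φ(x) for all x ∈ ℝ, and φ satisfies −φ'' + ωφ = |φ|^α φ on ℝ. -/
/-! Rotate `Φ` by the constant phase `e^{-iθ₀}`, `θ₀ = arg Φ(0)`, so that `Ψ = e^{-iθ₀} Φ` is real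
at `0`. Evenness gives `Ψ'(0) = 0`, and since `|Ψ| = |Φ|`, the equation reads `Ψ'' = q Ψ` with the
real continuous potential `q = ω - |Φ|^α`. Hence `Im Ψ` solves the linear equation `v'' = q v` with
`v(0) = v'(0) = 0`, and vanishes identically by uniqueness for the first-order system
`(v, v')' = (v', q v)`, which is Lipschitz on compact time intervals. -/

open Set

lemma Function.Even.deriv_zero {F : Type*} [NormedAddCommGroup F] [NormedSpace ℝ F] {f : ℝ → F}
    (hf : f.Even) : deriv f 0 = 0 := by
  have h := deriv_comp_neg f 0
  rw [show (fun x => f (-x)) = f from funext hf, neg_zero] at h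
  linear_combination (norm := module) (2 : ℝ)⁻¹ • h

section Derivatives

variable {E F : Type*} [NormedAddCommGroup E] [NormedSpace ℝ E] [NormedAddCommGroup F]
  [NormedSpace ℝ F]

lemma ContinuousLinearMap.deriv_comp_apply (ℓ : E →L[ℝ] F) {f : ℝ → E} {x : ℝ}
    (hf : DifferentiableAt ℝ f x) : deriv (fun y => ℓ (f y)) x = ℓ (deriv f x) :=
  (ℓ.hasFDerivAt.comp_hasDerivAt x hf.hasDerivAt).deriv

lemma ContinuousLinearMap.deriv_deriv_comp_apply (ℓ : E →L[ℝ] F) {f : ℝ → E}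
    (hf : Differentiable ℝ f) {x : ℝ} (hf' : DifferentiableAt ℝ (deriv f) x) :
    deriv (deriv fun y => ℓ (f y)) x = ℓ (deriv (deriv f) x) := by
  rw [show deriv (fun y => ℓ (f y)) = fun y => ℓ (deriv f y) from
    funext fun y => ℓ.deriv_comp_apply (hf y)]
  exact ℓ.deriv_comp_apply hf'

end Derivatives

section LinearSecondOrder

variable {E : Type*} [NormedAddCommGroup E] [NormedSpace ℝ E]

lemma lipschitzWith_prodMk_snd_smul_fst {c M : ℝ} (hc : ‖c‖ ≤ M) :
    LipschitzWith (max 1 M).toNNReal (fun y : E × E => (y.2, c • y.1)) := by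
  refine LipschitzWith.of_dist_le_mul fun a b => ?_
  rw [Real.coe_toNNReal _ (le_max_of_le_left zero_le_one), Prod.dist_eq, Prod.dist_eq,
    dist_smul₀]
  have h₁ := dist_nonneg (x := a.1) (y := b.1)
  have h₂ := dist_nonneg (x := a.2) (y := b.2)
  refine max_le ?_ ?_
  · nlinarith [le_max_left 1 M, le_max_right (dist a.1 b.1) (dist a.2 b.2)]
  · nlinarith [le_max_right 1 M, le_max_left (dist a.1 b.1) (dist a.2 b.2), norm_nonneg c]

theorem eq_zero_of_deriv_deriv_eq_smul {q : ℝ → ℝ} (hq : Continuous q) {f : ℝ → E}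
    (hf : Differentiable ℝ f) (hf' : Differentiable ℝ (deriv f))
    (hode : ∀ x, deriv (deriv f) x = q x • f x) {t₀ : ℝ} (h₀ : f t₀ = 0)
    (h₀' : deriv f t₀ = 0) (x : ℝ) : f x = 0 := by
  set r := |x - t₀| + 1
  have hr : 0 < r := by positivity
  have hx := abs_sub_lt_iff.mp (lt_add_one |x - t₀|)
  obtain ⟨M, hM⟩ := (isCompact_Icc (a := t₀ - r) (b := t₀ + r)).exists_bound_of_continuousOn
    hq.continuousOn
  have hlip : ∀ t ∈ Ioo (t₀ - r) (t₀ + r), LipschitzOnWith (max 1 M).toNNReal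
      (fun y : E × E => (y.2, q t • y.1)) univ :=
    fun t ht => (lipschitzWith_prodMk_snd_smul_fst (hM t (Ioo_subset_Icc_self ht))).lipschitzOnWith
  have hsol : ∀ t, HasDerivAt (fun s => (f s, deriv f s)) (deriv f t, q t • f t) t :=
    fun t => (hf t).hasDerivAt.prodMk (hode t ▸ (hf' t).hasDerivAt)
  have hzero : ∀ t, HasDerivAt (fun _ => ((0 : E), (0 : E))) ((0 : E), q t • (0 : E)) t := by
    intro t
    rw [smul_zero, Prod.mk_zero_zero]
    exact hasDerivAt_const t 0
  have huniq := ODE_solution_unique_of_mem_Ioo (s := fun _ => univ) hlip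
    ⟨by linarith, by linarith⟩ (fun t _ => ⟨hsol t, trivial⟩) (fun t _ => ⟨hzero t, trivial⟩)
    (by simp only [h₀, h₀'])
  exact congrArg Prod.fst (huniq ⟨by linarith [hx.2], by linarith [hx.1]⟩)

end LinearSecondOrder

theorem im_eq_zero_of_deriv_deriv_eq_ofReal_mul {q : ℝ → ℝ} (hq : Continuous q) {Ψ : ℝ → ℂ}
    (hΨ : Differentiable ℝ Ψ) (hΨ' : Differentiable ℝ (deriv Ψ))
    (hode : ∀ x, deriv (deriv Ψ) x = q x * Ψ x) {t₀ : ℝ} (h₀ : (Ψ t₀).im = 0)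
    (h₀' : (deriv Ψ t₀).im = 0) (x : ℝ) : (Ψ x).im = 0 := by
  have hderiv : ∀ y, deriv (fun t => (Ψ t).im) y = (deriv Ψ y).im :=
    fun y => Complex.imCLM.deriv_comp_apply (hΨ y)
  refine eq_zero_of_deriv_deriv_eq_smul (f := fun t => (Ψ t).im) hq
    (Complex.imCLM.differentiable.comp hΨ) ?_ ?_ h₀ (by rw [hderiv, h₀']) x
  · rw [funext hderiv]
    exact Complex.imCLM.differentiable.comp hΨ'
  · intro y
    have h := Complex.imCLM.deriv_deriv_comp_apply hΨ (hΨ' y)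
    simp only [Complex.imCLM_apply] at h
    rw [h, hode y]
    simp [Complex.mul_im]

theorem even_solution_is_rotation_of_real_general (L ω α : ℝ) (hα : 0 < α)
    (Φ : ℝ → ℂ) (heven : ∀ x : ℝ, Φ (-x) = Φ x) (hC2 : ContDiff ℝ 2 Φ)
    (hper : Function.Periodic Φ L)
    (heq : ∀ x : ℝ, -(deriv (deriv Φ) x) + (ω : ℂ) * Φ x = ((‖Φ x‖ ^ α : ℝ) : ℂ) * Φ x) :
    ∃ θ₀ : ℝ, ∃ φ : ℝ → ℝ,
      (∀ x : ℝ, φ (-x) = φ x) ∧ Function.Periodic φ L ∧ ContDiff ℝ 2 φ ∧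
      (∀ x : ℝ, Φ x = Complex.exp (θ₀ * Complex.I) * (φ x : ℂ)) ∧
      ∀ x : ℝ, -(deriv (deriv φ) x) + ω * φ x = |φ x| ^ α * φ x := by
  set θ₀ := (Φ 0).arg
  set c := Complex.exp (↑(-θ₀) * Complex.I)
  set Ψ : ℝ → ℂ := fun x => c * Φ x
  set q : ℝ → ℝ := fun x => ω - ‖Φ x‖ ^ α
  have hrot : Complex.exp (θ₀ * Complex.I) * c = 1 := by
    rw [← Complex.exp_add, Complex.ofReal_neg, ← add_mul, add_neg_cancel, zero_mul,
      Complex.exp_zero]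
  have hΨC2 : ContDiff ℝ 2 Ψ := contDiff_const.mul hC2
  have hΨ : Differentiable ℝ Ψ := hΨC2.differentiable two_ne_zero
  have hΨ' : Differentiable ℝ (deriv Ψ) := hΨC2.differentiable_deriv_two
  have hq : Continuous q :=
    continuous_const.sub (hC2.continuous.norm.rpow_const fun _ => Or.inr hα.le)
  have hode : ∀ x, deriv (deriv Ψ) x = q x * Ψ x := fun x => by
    simp only [Ψ, q, deriv_const_mul_field']
    push_cast
    linear_combination (-c) * heq x
  have hΨ₀ : (Ψ 0).im = 0 := by
    have : Ψ 0 = ‖Φ 0‖ := by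
      rw [← mul_one (‖Φ 0‖ : ℂ), ← hrot, ← mul_assoc, Complex.norm_mul_exp_arg_mul_I, mul_comm]
    rw [this, Complex.ofReal_im]
  have hΨ₀' : deriv Ψ 0 = 0 := Function.Even.deriv_zero fun x => by simp only [Ψ, heven]
  have hreal : ∀ x, Ψ x = (Ψ x).re := fun x => Complex.ext rfl
    (im_eq_zero_of_deriv_deriv_eq_ofReal_mul hq hΨ hΨ' hode hΨ₀ (by rw [hΨ₀', Complex.zero_im]) x)
  have hnorm : ∀ x, ‖Φ x‖ = |(Ψ x).re| := fun x => calc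
    ‖Φ x‖ = ‖Ψ x‖ := by rw [norm_mul, Complex.norm_exp_ofReal_mul_I, one_mul]
    _ = |(Ψ x).re| := by conv_lhs => rw [hreal x, Complex.norm_real, Real.norm_eq_abs]
  refine ⟨θ₀, fun x => (Ψ x).re, fun x => by simp only [Ψ, heven],
    fun x => by simp only [Ψ, hper x], Complex.reCLM.contDiff.comp hΨC2, fun x => ?_, fun x => ?_⟩
  · rw [← hreal, ← mul_assoc, hrot, one_mul]
  · have h := Complex.reCLM.deriv_deriv_comp_apply hΨ (hΨ' x)
    simp only [Complex.reCLM_apply] at h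
    rw [h, hode x, hreal x, ← Complex.ofReal_mul, Complex.ofReal_re, ← hnorm]
    ring

theorem even_solution_is_rotation_of_real (L ω α : ℝ) (hL : 0 < L) (hω : 0 < ω) (hα : 0 < α)
    (Φ : ℝ → ℂ) (heven : ∀ x : ℝ, Φ (-x) = Φ x) (hC2 : ContDiff ℝ 2 Φ)
    (hper : Function.Periodic Φ L) (hne : ¬ ∀ x : ℝ, Φ x = 0)
    (heq : ∀ x : ℝ, -(deriv (deriv Φ) x) + (ω : ℂ) * Φ x = ((‖Φ x‖ ^ α : ℝ) : ℂ) * Φ x) :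
    ∃ θ₀ : ℝ, ∃ φ : ℝ → ℝ,
      (∀ x : ℝ, φ (-x) = φ x) ∧ Function.Periodic φ L ∧ ContDiff ℝ 2 φ ∧
      (∀ x : ℝ, Φ x = Complex.exp (θ₀ * Complex.I) * (φ x : ℂ)) ∧
      ∀ x : ℝ, -(deriv (deriv φ) x) + ω * φ x = |φ x| ^ α * φ x :=
  even_solution_is_rotation_of_real_general L ω α hα Φ heven hC2 hper heq
end

section
/- Let L>0, ω>0 and α>0, and let φ : ℝ → ℝ be a twice continuously differentiable L-periodic function with φ(x) > 0 for all x, satisfying −φ'' + ωφ = φ^{α+1} on ℝ. Then for every continuously differentiable L-periodic function ψ : ℝ → ℝ one has ∫₀ᴸ ( ψ'(x)² + ω ψ(x)² − φ(x)^α ψ(x)² ) dx ≥ 0, with equality if and only if ψ is a scalar multiple of φ. In other words, the operator L₂ = −∂ₓ² + ω − φ^α is nonnegative and its kernel among periodic functions is spanned by φ. -/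
/-!
Picone's identity: for `φ ≠ 0` and `u = ψ / φ`,
`ψ'² + (φ''/φ) ψ² = φ² u'² + (φ' ψ² / φ)'`.
The profile equation says exactly that `φ ^ α = ω - φ''/φ`, so the quadratic form `Q₂(ψ)` is the
integral of the left-hand side; over a period the exact derivative integrates to zero, leaving
`∫₀ᴸ φ² u'² ≥ 0`. This vanishes iff `u' ≡ 0`, i.e. iff `ψ` is a constant multiple of `φ`.
-/

open intervalIntegral Function

theorem Function.Periodic.deriv {f : ℝ → ℝ} {L : ℝ} (hf : Periodic f L) :
    Periodic (_root_.deriv f) L := fun x => by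
  rw [← deriv_comp_add_const, show (fun y => f (y + L)) = f from funext hf]

theorem Function.Periodic.intervalIntegral_deriv_eq_zero {f : ℝ → ℝ} {L : ℝ}
    (hf : ContDiff ℝ 1 f) (hper : Periodic f L) : ∫ x in (0 : ℝ)..L, _root_.deriv f x = 0 := by
  rw [integral_deriv_eq_sub (fun x _ => hf.differentiable one_ne_zero x)
    ((hf.continuous_deriv le_rfl).intervalIntegrable 0 L), hper.eq, sub_self]

theorem Function.Periodic.eq_zero_of_integral_eq_zero {f : ℝ → ℝ} {L : ℝ} (hper : Periodic f L)
    (hL : 0 < L) (hf : Continuous f) (hnn : ∀ x, 0 ≤ f x)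
    (h0 : ∫ x in (0 : ℝ)..L, f x = 0) (x : ℝ) : f x = 0 := by
  have hae := (integral_eq_zero_iff_of_le_of_nonneg_ae hL.le (.of_forall hnn)
    (hf.intervalIntegrable 0 L)).mp h0
  have hIoc : Set.EqOn f 0 (Set.Ioc 0 L) :=
    MeasureTheory.Measure.eqOn_Ioc_of_ae_eq _ hae hf.continuousOn continuousOn_const
  obtain ⟨y, hy, hxy⟩ := hper.exists_mem_Ioc hL x 0
  rw [zero_add] at hy
  rw [hxy, hIoc hy, Pi.zero_apply]

theorem picone_identity {φ ψ : ℝ → ℝ} {x : ℝ} (hφ : DifferentiableAt ℝ φ x)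
    (hφ' : DifferentiableAt ℝ (deriv φ) x) (hψ : DifferentiableAt ℝ ψ x) (hφx : φ x ≠ 0) :
    deriv ψ x ^ 2 + deriv (deriv φ) x / φ x * ψ x ^ 2 =
      φ x ^ 2 * deriv (fun y => ψ y / φ y) x ^ 2 +
        deriv (fun y => deriv φ y * ψ y ^ 2 / φ y) x := by
  rw [deriv_fun_div hψ hφ hφx, deriv_fun_div (hφ'.fun_mul (hψ.fun_pow 2)) hφ hφx,
    deriv_fun_mul hφ' (hψ.fun_pow 2), deriv_fun_pow hψ]
  field_simp
  ring

theorem integral_picone_of_periodic {φ ψ : ℝ → ℝ} {L : ℝ} (hφ : ContDiff ℝ 2 φ)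
    (hφ0 : ∀ x, φ x ≠ 0) (hψ : ContDiff ℝ 1 ψ) (hφL : Periodic φ L) (hψL : Periodic ψ L) :
    ∫ x in (0 : ℝ)..L, (deriv ψ x ^ 2 + deriv (deriv φ) x / φ x * ψ x ^ 2) =
      ∫ x in (0 : ℝ)..L, φ x ^ 2 * deriv (fun y => ψ y / φ y) x ^ 2 := by
  have hφ1 : ContDiff ℝ 1 φ := hφ.of_le (by norm_num)
  have hφ' : ContDiff ℝ 1 (deriv φ) := hφ.deriv'
  have hu : ContDiff ℝ 1 (fun y => ψ y / φ y) := hψ.div hφ1 hφ0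
  have hb : ContDiff ℝ 1 (fun y => deriv φ y * ψ y ^ 2 / φ y) :=
    (hφ'.mul (hψ.pow 2)).div hφ1 hφ0
  have hbL : Periodic (fun y => deriv φ y * ψ y ^ 2 / φ y) L := fun x => by
    simp only [hφL.deriv x, hψL x, hφL x]
  rw [integral_congr fun x _ => picone_identity (hφ1.differentiable one_ne_zero x)
      (hφ'.differentiable one_ne_zero x) (hψ.differentiable one_ne_zero x) (hφ0 x),
    integral_add (f := fun x => φ x ^ 2 * deriv (fun y => ψ y / φ y) x ^ 2)
      (((hφ1.continuous.pow 2).mul ((hu.continuous_deriv le_rfl).pow 2)).intervalIntegrable 0 L)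
      ((hb.continuous_deriv le_rfl).intervalIntegrable 0 L),
    hbL.intervalIntegral_deriv_eq_zero hb, add_zero]

theorem exists_eq_const_mul_iff_deriv_div_eq_zero {φ ψ : ℝ → ℝ} (hφ : Differentiable ℝ φ)
    (hψ : Differentiable ℝ ψ) (hφ0 : ∀ x, φ x ≠ 0) :
    (∃ c : ℝ, ∀ x, ψ x = c * φ x) ↔ ∀ x, deriv (fun y => ψ y / φ y) x = 0 := by
  constructor
  · rintro ⟨c, hc⟩ x
    have hconst : (fun y => ψ y / φ y) = fun _ => c :=
      funext fun y => by rw [hc, mul_div_cancel_right₀ _ (hφ0 y)]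
    rw [hconst, deriv_const]
  · intro h
    refine ⟨ψ 0 / φ 0, fun x => ?_⟩
    rw [← is_const_of_deriv_eq_zero (f := fun y => ψ y / φ y) (hψ.div hφ hφ0) h x 0,
      div_mul_cancel₀ _ (hφ0 x)]

theorem integral_sq_mul_sq_deriv_div_eq_zero_iff {φ ψ : ℝ → ℝ} {L : ℝ} (hL : 0 < L)
    (hφ : ContDiff ℝ 1 φ) (hφ0 : ∀ x, φ x ≠ 0) (hψ : ContDiff ℝ 1 ψ) (hφL : Periodic φ L)
    (hψL : Periodic ψ L) :
    ∫ x in (0 : ℝ)..L, φ x ^ 2 * deriv (fun y => ψ y / φ y) x ^ 2 = 0 ↔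
      ∃ c : ℝ, ∀ x, ψ x = c * φ x := by
  have huL : Periodic (fun y => ψ y / φ y) L := fun x => by simp only [hψL x, hφL x]
  have hwL : Periodic (fun x => φ x ^ 2 * deriv (fun y => ψ y / φ y) x ^ 2) L :=
    fun x => by simp only [hφL x, huL.deriv x]
  have hw : Continuous fun x => φ x ^ 2 * deriv (fun y => ψ y / φ y) x ^ 2 :=
    (hφ.continuous.pow 2).mul (((hψ.div hφ hφ0).continuous_deriv le_rfl).pow 2)
  rw [exists_eq_const_mul_iff_deriv_div_eq_zero (hφ.differentiable one_ne_zero)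
    (hψ.differentiable one_ne_zero) hφ0]
  refine ⟨fun h x => ?_, fun h => by simp [h]⟩
  simpa [hφ0 x] using hwL.eq_zero_of_integral_eq_zero hL hw (fun x => by positivity) h x

theorem L2_nonnegative_kernel_phi_general (L ω α : ℝ) (hL : 0 < L)
    (φ : ℝ → ℝ) (hC2 : ContDiff ℝ 2 φ) (hper : Function.Periodic φ L)
    (hpos : ∀ x : ℝ, 0 < φ x)
    (heq : ∀ x : ℝ, -(deriv (deriv φ) x) + ω * φ x = φ x ^ (α + 1)) :
    ∀ ψ : ℝ → ℝ, ContDiff ℝ 1 ψ → Function.Periodic ψ L →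
      (0 ≤ ∫ x in (0:ℝ)..L, (deriv ψ x ^ 2 + ω * ψ x ^ 2 - φ x ^ α * ψ x ^ 2)) ∧
      ((∫ x in (0:ℝ)..L, (deriv ψ x ^ 2 + ω * ψ x ^ 2 - φ x ^ α * ψ x ^ 2)) = 0 ↔
        ∃ c : ℝ, ∀ x : ℝ, ψ x = c * φ x) := by
  intro ψ hψ hψL
  have hφ0 : ∀ x, φ x ≠ 0 := fun x => (hpos x).ne'
  have hpot : ∀ x, φ x ^ α = ω - deriv (deriv φ) x / φ x := fun x => by
    rw [eq_sub_iff_add_eq, ← mul_left_inj' (hφ0 x), add_mul, ← Real.rpow_add_one (hφ0 x), ← heq x,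
      div_mul_cancel₀ _ (hφ0 x)]
    ring
  have hform : ∫ x in (0:ℝ)..L, (deriv ψ x ^ 2 + ω * ψ x ^ 2 - φ x ^ α * ψ x ^ 2) =
      ∫ x in (0:ℝ)..L, φ x ^ 2 * deriv (fun y => ψ y / φ y) x ^ 2 := by
    rw [← integral_picone_of_periodic hC2 hφ0 hψ hper hψL]
    congr 1
    funext x
    rw [hpot]
    ring
  rw [hform, integral_sq_mul_sq_deriv_div_eq_zero_iff hL (hC2.of_le (by norm_num)) hφ0 hψ hper hψL]
  exact ⟨integral_nonneg hL.le fun x _ => by positivity, Iff.rfl⟩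

theorem L2_nonnegative_kernel_phi (L ω α : ℝ) (hL : 0 < L) (hω : 0 < ω) (hα : 0 < α)
    (φ : ℝ → ℝ) (hC2 : ContDiff ℝ 2 φ) (hper : Function.Periodic φ L)
    (hpos : ∀ x : ℝ, 0 < φ x)
    (heq : ∀ x : ℝ, -(deriv (deriv φ) x) + ω * φ x = φ x ^ (α + 1)) :
    ∀ ψ : ℝ → ℝ, ContDiff ℝ 1 ψ → Function.Periodic ψ L →
      (0 ≤ ∫ x in (0:ℝ)..L, (deriv ψ x ^ 2 + ω * ψ x ^ 2 - φ x ^ α * ψ x ^ 2)) ∧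
      ((∫ x in (0:ℝ)..L, (deriv ψ x ^ 2 + ω * ψ x ^ 2 - φ x ^ α * ψ x ^ 2)) = 0 ↔
        ∃ c : ℝ, ∀ x : ℝ, ψ x = c * φ x) :=
  L2_nonnegative_kernel_phi_general L ω α hL φ hC2 hper hpos heq
end
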